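/- For all integers n ≥ 1 and 0 ≤ j ≤ n-1, the alternating sum ∑_{k=1}^{n} (-1)^{k-1} C(n,k) C(n-k-1, j) equals C(n-1, j), where C(n-k-1, j) is interpreted via the generalized binomial coefficient convention so that C(-1, j) = (-1)^j. -/

import Mathlib

/-!
Pascal's rule reads `Δ C(·, j + 1) = C(·, j)`, so `Δⁿ C(·, j) = 0` for `j < n`. Expanding `Δⁿ` at
`-1` gives `∑_{k=0}^{n} (-1)^k C(n,k) C(n-k-1, j) = 0`, whose `k = 0` term is `C(n-1, j)`.
-/

open Finset Function fwdDiff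

section BinomialRing

variable {R : Type*} [NonAssocRing R] [Pow R ℕ] [NatPowAssoc R] [BinomialRing R]

theorem fwdDiff_ringChoose (j : ℕ) :
    Δ_[1] (fun x : R ↦ Ring.choose x (j + 1)) = fun x ↦ Ring.choose x j := by
  ext x
  simp only [fwdDiff, Ring.choose_succ_succ, add_sub_cancel_right]

theorem fwdDiff_iter_ringChoose (j k : ℕ) :
    (Δ_[1])^[k] (fun x : R ↦ Ring.choose x (k + j)) = fun x ↦ Ring.choose x j := by
  induction k generalizing j with
  | zero => simp only [zero_add, iterate_zero, id_eq]
  | succ k ih =>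
    simp only [iterate_succ_apply', add_assoc, add_comm 1 j, ih, fwdDiff_ringChoose]

theorem fwdDiff_iter_ringChoose_eq_zero_of_lt {j n : ℕ} (h : j < n) :
    (Δ_[1])^[n] (fun x : R ↦ Ring.choose x j) = 0 := by
  obtain ⟨m, rfl⟩ := Nat.exists_eq_add_of_lt h
  have hone : (Δ_[1])^[j] (fun x : R ↦ Ring.choose x j) = fun _ ↦ 1 := by
    simpa only [add_zero, Ring.choose_zero_right] using fwdDiff_iter_ringChoose (R := R) 0 j
  rw [add_assoc, add_comm, iterate_add_apply, hone, iterate_succ_apply, fwdDiff_const]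
  ext x
  simp [fwdDiff_iter_eq_sum_shift]

end BinomialRing

theorem sum_range_neg_one_pow_mul_choose_mul_ringChoose {R : Type*} [CommRing R] [BinomialRing R]
    {j n : ℕ} (h : j < n) :
    ∑ k ∈ range (n + 1), (-1 : R) ^ k * n.choose k * Ring.choose ((n : R) - k - 1) j = 0 := by
  have hsum := fwdDiff_iter_eq_sum_shift (1 : R) (fun x : R ↦ Ring.choose x j) n (-1)
  rw [fwdDiff_iter_ringChoose_eq_zero_of_lt h, Pi.zero_apply, ← sum_range_reflect] at hsum
  rw [hsum]
  refine sum_congr rfl fun k hk ↦ ?_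
  have hkn : k ≤ n := Nat.lt_succ_iff.mp (mem_range.mp hk)
  rw [Nat.add_sub_cancel, Nat.sub_sub_self hkn, Nat.choose_symm hkn, nsmul_one, Nat.cast_sub hkn,
    zsmul_eq_mul]
  push_cast
  ring_nf

/-- For all integers `n ≥ 1` and `0 ≤ j ≤ n-1`, the alternating sum
`∑_{k=1}^{n} (-1)^{k-1} C(n,k) C(n-k-1, j)` equals `C(n-1, j)`, where the
inner binomial coefficient is the generalized (binomial ring) one on `ℤ`,
so that `C(-1, j) = (-1)^j`. -/
theorem stmt_0 (n : ℕ) (hn : 1 ≤ n) (j : ℕ) (hj : j ≤ n - 1) :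
    ∑ k ∈ Finset.Icc 1 n,
      (-1 : ℤ) ^ (k - 1) * (n.choose k : ℤ) * Ring.choose ((n : ℤ) - k - 1) j
      = ((n - 1).choose j : ℤ) := by
  have hvanish := sum_range_neg_one_pow_mul_choose_mul_ringChoose (R := ℤ) (j := j) (n := n)
    (by omega)
  rw [sum_range_eq_add_Ico _ (by omega), Ico_add_one_right_eq_Icc] at hvanish
  have hfirst : Ring.choose ((n : ℤ) - (0 : ℕ) - 1) j = (n - 1).choose j := by
    rw [Nat.cast_zero, sub_zero, ← Nat.cast_one, ← Nat.cast_sub hn, Ring.choose_natCast]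
  have hsign : ∀ k ∈ Icc 1 n, (-1 : ℤ) ^ (k - 1) * n.choose k * Ring.choose ((n : ℤ) - k - 1) j
      = -((-1) ^ k * n.choose k * Ring.choose ((n : ℤ) - k - 1) j) := by
    intro k hk
    obtain ⟨m, rfl⟩ := Nat.exists_eq_add_of_lt (mem_Icc.mp hk).1
    simp [pow_succ]
  rw [sum_congr rfl hsign, sum_neg_distrib]
  simp only [pow_zero, Nat.choose_zero_right, Nat.cast_one, one_mul, hfirst] at hvanish
  linarith
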